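/- Let R(t,g) be defined for t > 0 by R(t,g) = g/2 + κ√t·M_0(g²/(2t)) when g ≤ γ√t and R(t,g) = γ√t/2 when g ≥ γ√t, where κ = 1/(√(2π)·erfi(γ/√2)) and γ is the unique positive root of x ↦ M_0(x²/2). Then for fixed t > 0, the function g ↦ R(t,g) is non-decreasing and concave on [0, ∞), and R(t,g) ≤ γ√t/2 for all g ≥ 0. -/

import Mathlib

/-!
Write `c = γ √t`. Substituting `s = g / √(2t)`, the branch `g / 2 + κ √t M₀(g² / 2t)` becomes
`g / 2 + κ √t (e^{s²} - √π s erfi s)`, a smooth function of `g` whose derivative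
`(1 - erfi (g / √(2t)) / erfi (γ / √2)) / 2` is decreasing and vanishes at `g = c`; so the branch is
concave on `ℝ` and nondecreasing on `(-∞, c]`. Since `M₀(γ² / 2) = 0`, the branch takes the value
`c / 2` at `c`, hence `R(t, g)` is the branch evaluated at `min g c`, and composing with the concave
nondecreasing map `g ↦ min g c` preserves both properties.
-/

open Real

noncomputable def erfi (x : ℝ) : ℝ := (2 / Real.sqrt π) * ∫ z in (0:ℝ)..x, Real.exp (z ^ 2)

noncomputable def M0 (u : ℝ) : ℝ := Real.exp u - Real.sqrt (π * u) * erfi (Real.sqrt u)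

noncomputable def kappa (γ : ℝ) : ℝ := 1 / (Real.sqrt (2 * π) * erfi (γ / Real.sqrt 2))

noncomputable def R (γ t g : ℝ) : ℝ :=
  if t = 0 then 0
  else if g ≤ γ * Real.sqrt t then g / 2 + kappa γ * Real.sqrt t * M0 (g ^ 2 / (2 * t))
  else γ * Real.sqrt t / 2

open Set

section CompMin

variable {f f' : ℝ → ℝ} {c : ℝ}

lemma monotoneOn_Iic_of_hasDerivAt_of_antitone (hf : ∀ x, HasDerivAt f (f' x) x)
    (hf' : Antitone f') (hc : 0 ≤ f' c) : MonotoneOn f (Iic c) := by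
  refine monotoneOn_of_hasDerivWithinAt_nonneg (convex_Iic c)
    (fun x _ => (hf x).continuousAt.continuousWithinAt) (fun x _ => (hf x).hasDerivWithinAt) ?_
  rw [interior_Iic]
  exact fun x hx => hc.trans (hf' (le_of_lt hx))

lemma monotone_comp_min_of_monotoneOn_Iic (hf : MonotoneOn f (Iic c)) :
    Monotone fun x => f (min x c) :=
  fun x y hxy => hf (min_le_right x c) (min_le_right y c) (min_le_min_right c hxy)

lemma concaveOn_comp_min_of_monotoneOn_Iic (hconc : ConcaveOn ℝ (Iic c) f)
    (hmono : MonotoneOn f (Iic c)) : ConcaveOn ℝ univ fun x => f (min x c) := by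
  have himage : (fun x => min x c) '' univ = Iic c := by
    rw [image_univ]
    ext y
    exact ⟨fun ⟨x, hx⟩ => hx ▸ min_le_right x c, fun hy => ⟨y, min_eq_left hy⟩⟩
  have hmin : ConcaveOn ℝ univ fun x => min x c :=
    (concaveOn_id convex_univ).inf (concaveOn_const c convex_univ)
  exact (himage ▸ hconc).comp hmin (himage ▸ hmono)

end CompMin

lemma erfi_zero : erfi 0 = 0 := by simp [erfi]

lemma hasDerivAt_erfi (x : ℝ) : HasDerivAt erfi (2 / √π * exp (x ^ 2)) x :=
  ((by fun_prop : Continuous fun z : ℝ => exp (z ^ 2)).integral_hasStrictDerivAt 0 x)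
    |>.hasDerivAt.const_mul _

lemma erfi_strictMono : StrictMono erfi :=
  strictMono_of_hasDerivAt_pos hasDerivAt_erfi fun x => by
    have : 0 < √π := sqrt_pos.2 pi_pos
    positivity

lemma erfi_pos {x : ℝ} (hx : 0 < x) : 0 < erfi x :=
  erfi_zero ▸ erfi_strictMono hx

/-- `M0 (s ^ 2)` for `s ≥ 0`: substituting `u = s ^ 2` removes the square-root singularity of `M0`
at `0`. -/
noncomputable def M0Sq (s : ℝ) : ℝ := exp (s ^ 2) - √π * s * erfi s

lemma M0_sq {s : ℝ} (hs : 0 ≤ s) : M0 (s ^ 2) = M0Sq s := by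
  rw [M0, M0Sq, sqrt_sq hs, sqrt_mul pi_pos.le, sqrt_sq hs]

lemma hasDerivAt_M0Sq (s : ℝ) : HasDerivAt M0Sq (-(√π * erfi s)) s := by
  have h := ((hasDerivAt_pow 2 s).exp).sub
    (((hasDerivAt_id' s).const_mul √π).mul (hasDerivAt_erfi s))
  refine h.congr_deriv ?_
  field_simp
  ring

noncomputable def Rbranch (γ t g : ℝ) : ℝ := g / 2 + kappa γ * √t * M0Sq (g / √(2 * t))

section Branch

variable {γ t : ℝ}

lemma mul_sqrt_div_sqrt_two_mul (x : ℝ) (ht : 0 < t) : x * √t / √(2 * t) = x / √2 := by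
  rw [sqrt_mul zero_le_two, mul_div_mul_right _ _ (sqrt_pos.2 ht).ne']

lemma hasDerivAt_Rbranch (ht : 0 < t) (g : ℝ) :
    HasDerivAt (Rbranch γ t) ((1 - erfi (g / √(2 * t)) / erfi (γ / √2)) / 2) g := by
  have h := ((hasDerivAt_id' g).div_const 2).add
    (((hasDerivAt_M0Sq _).comp g ((hasDerivAt_id' g).div_const √(2 * t))).const_mul
      (kappa γ * √t))
  refine h.congr_deriv ?_
  rw [kappa, sqrt_mul zero_le_two, sqrt_mul zero_le_two]
  rcases eq_or_ne (erfi (γ / √2)) 0 with hE | hE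
  · simp [hE]
  field_simp
  rw [sq_sqrt zero_le_two]
  ring

lemma Rbranch_threshold (hγ : 0 ≤ γ) (hroot : M0 (γ ^ 2 / 2) = 0) (ht : 0 < t) :
    Rbranch γ t (γ * √t) = γ * √t / 2 := by
  rw [Rbranch, mul_sqrt_div_sqrt_two_mul γ ht, ← M0_sq (by positivity), div_pow,
    sq_sqrt zero_le_two, hroot, mul_zero, add_zero]

lemma R_eq_Rbranch_min (hγ : 0 ≤ γ) (hroot : M0 (γ ^ 2 / 2) = 0) (ht : 0 < t) {g : ℝ}
    (hg : 0 ≤ g) : R γ t g = Rbranch γ t (min g (γ * √t)) := by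
  rw [R, if_neg ht.ne']
  split_ifs with h
  · rw [min_eq_left h, Rbranch, ← M0_sq (by positivity), div_pow, sq_sqrt (by positivity)]
  · rw [min_eq_right (le_of_not_ge h), Rbranch_threshold hγ hroot ht]

end Branch

theorem R_monotone_concave_bounded (γ : ℝ) (hγ : 0 < γ) (hroot : M0 (γ ^ 2 / 2) = 0)
    (t : ℝ) (ht : 0 < t) :
    MonotoneOn (fun g => R γ t g) (Set.Ici 0) ∧
    ConcaveOn ℝ (Set.Ici 0) (fun g => R γ t g) ∧
    ∀ g : ℝ, 0 ≤ g → R γ t g ≤ γ * Real.sqrt t / 2 := by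
  have hE : 0 < erfi (γ / √2) := erfi_pos (by positivity)
  have hderiv := hasDerivAt_Rbranch (γ := γ) ht
  have hanti : Antitone fun g => (1 - erfi (g / √(2 * t)) / erfi (γ / √2)) / 2 :=
    fun x y hxy => by
      have := erfi_strictMono.monotone (div_le_div_of_nonneg_right hxy (sqrt_nonneg (2 * t)))
      dsimp only
      gcongr
  have hzero : (1 - erfi (γ * √t / √(2 * t)) / erfi (γ / √2)) / 2 = 0 := by
    rw [mul_sqrt_div_sqrt_two_mul γ ht, div_self hE.ne', sub_self, zero_div]
  have hmono := monotoneOn_Iic_of_hasDerivAt_of_antitone hderiv hanti hzero.ge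
  have hconc : ConcaveOn ℝ (Iic (γ * √t)) (Rbranch γ t) := by
    rw [← funext fun g => (hderiv g).deriv] at hanti
    exact (hanti.concaveOn_univ_of_deriv fun g => (hderiv g).differentiableAt).subset
      (subset_univ _) (convex_Iic _)
  have hR : EqOn (fun g => R γ t g) (fun g => Rbranch γ t (min g (γ * √t))) (Ici 0) :=
    fun g hg => R_eq_Rbranch_min hγ.le hroot ht hg
  refine ⟨(monotone_comp_min_of_monotoneOn_Iic hmono).monotoneOn _ |>.congr hR.symm,
    (concaveOn_comp_min_of_monotoneOn_Iic hconc hmono).subset (subset_univ _) (convex_Ici 0)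
      |>.congr hR.symm, fun g hg => ?_⟩
  rw [R_eq_Rbranch_min hγ.le hroot ht hg, ← Rbranch_threshold hγ.le hroot ht]
  exact hmono (min_le_right g _) self_mem_Iic (min_le_right g _)
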